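/- arXiv:2510.05666 — 6 statements merged into one kernel-verified Lean document; each statement's English description precedes it below -/
import Mathlib

section
/- Let n, k be positive integers with 4 ≤ 2k ≤ n and let G, H ⊆ [n] with |G| ≤ k and |H| ≤ k. If there exists l ∈ [n] with μ_G(l) + μ_H(l) > l, then G and H are strongly intersecting, i.e., for all G' ≤ G and H' ≤ H (sets of the same sizes with elementwise order) we have G' ∩ H' ≠ ∅. -/
/-! Lowering elements can only increase counts below a threshold: if `G' ≤ G` and
`m = μ_G(l) ≥ 1`, then the `m`-th smallest element of `G'` is at most the `m`-th smallest of `G`,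
which is `≤ l`, so `μ_{G'}(l) ≥ μ_G(l)`. Hence `G' ∩ [l]` and `H' ∩ [l]` have more than `l`
elements in total and must meet. -/

open Finset

/-- 1-indexed i-th smallest element of a finset of naturals (0 if out of range). -/
def nth (A : Finset ℕ) (i : ℕ) : ℕ := (A.sort (· ≤ ·)).getD (i - 1) 0

/-- Elementwise order on finsets of equal size: `A ≤ B`. -/
def eLE (A B : Finset ℕ) : Prop :=
  A.card = B.card ∧ ∀ i, 1 ≤ i → i ≤ B.card → nth A i ≤ nth B i

/-- `A ⪯ B`: `|A| ≥ |B|` and the i-th smallest of `A` is ≤ the i-th smallest of `B` for `i ≤ |B|`. -/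
def preceq (A B : Finset ℕ) : Prop :=
  B.card ≤ A.card ∧ ∀ i, 1 ≤ i → i ≤ B.card → nth A i ≤ nth B i

/-- `μ_X(l) = |X ∩ [l]|`. -/
def mu (X : Finset ℕ) (l : ℕ) : ℕ := (X ∩ Finset.Icc 1 l).card

/-- `G ∼_si H` (within `[n]`): every `G' ≤ G` and `H' ≤ H` with `G', H' ⊆ [n]` intersect. -/
def sInt (n : ℕ) (G H : Finset ℕ) : Prop :=
  ∀ G' H' : Finset ℕ, G' ⊆ Finset.Icc 1 n → H' ⊆ Finset.Icc 1 n →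
    eLE G' G → eLE H' H → (G' ∩ H').Nonempty

/-- `F(n,k,𝒢)`: the k-subsets `S` of `[n]` with `S ⪯ G` for some `G ∈ 𝒢`. -/
def Fam (n k : ℕ) (𝒢 : Set (Finset ℕ)) : Set (Finset ℕ) :=
  {S | S ⊆ Finset.Icc 1 n ∧ S.card = k ∧ ∃ G ∈ 𝒢, preceq S G}

/-- A family is intersecting if every two members (possibly equal) intersect. -/
def IsIntersecting (𝒜 : Set (Finset ℕ)) : Prop :=
  ∀ A ∈ 𝒜, ∀ B ∈ 𝒜, (A ∩ B).Nonempty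

/-- The type of `G`: the largest `r` with `g_r < k + r`. -/
def typeOf (k : ℕ) (G : Finset ℕ) : ℕ :=
  ((Finset.range (G.card + 1)).filter fun r => 1 ≤ r ∧ nth G r < k + r).sup id

/-- `π(G) = {g_1, …, g_r}` where `r` is the type of `G`. -/
def piG (k : ℕ) (G : Finset ℕ) : Finset ℕ :=
  ((G.sort (· ≤ ·)).take (typeOf k G)).toFinset

theorem List.SortedLE.getElem_le_iff_lt_countP {α : Type*} [LinearOrder α] {s : List α}
    (hs : s.SortedLE) {i : ℕ} (hi : i < s.length) (c : α) :
    s[i] ≤ c ↔ i < s.countP (· ≤ c) := by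
  have hmono := List.sortedLE_iff_getElem_le_getElem_of_le.1 hs
  constructor
  · intro h
    have hprefix : (s.take (i + 1)).countP (· ≤ c) = i + 1 := by
      rw [List.countP_eq_length.2, List.length_take]
      · omega
      intro a ha
      obtain ⟨j, hj, rfl⟩ := List.mem_take_iff_getElem.1 ha
      simpa using (hmono (by omega)).trans h
    have := List.countP_append (l₁ := s.take (i + 1)) (l₂ := s.drop (i + 1)) (p := (· ≤ c))
    rw [List.take_append_drop] at this
    omega
  · contrapose!
    intro h
    have hsuffix : (s.drop i).countP (· ≤ c) = 0 := by
      refine List.countP_eq_zero.2 fun a ha => ?_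
      obtain ⟨j, hj, rfl⟩ := List.mem_drop_iff_getElem.1 ha
      simpa using h.trans_le (hmono (by omega))
    have := List.countP_append (l₁ := s.take i) (l₂ := s.drop i) (p := (· ≤ c))
    rw [List.take_append_drop, hsuffix] at this
    have := List.countP_le_length (p := (· ≤ c)) (l := s.take i)
    have := List.length_take_le i s
    omega

lemma nth_le_iff_le_card_filter (X : Finset ℕ) {m : ℕ} (hm : 1 ≤ m) (hmX : m ≤ #X) (l : ℕ) :
    nth X m ≤ l ↔ m ≤ #{x ∈ X | x ≤ l} := by
  have hi : m - 1 < (X.sort (· ≤ ·)).length := by rw [length_sort]; omega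
  rw [nth, List.getD_eq_getElem _ _ hi,
    (pairwise_sort X _).sortedLE.getElem_le_iff_lt_countP hi, ← Multiset.coe_countP, sort_eq,
    Multiset.countP_eq_card_filter]
  change m - 1 < #{x ∈ X | x ≤ l} ↔ _
  omega

lemma mu_le_card_filter (X : Finset ℕ) (l : ℕ) : mu X l ≤ #{x ∈ X | x ≤ l} :=
  card_le_card fun x hx => by simp_all

lemma mu_eq_card_filter {X : Finset ℕ} (hX : 0 ∉ X) (l : ℕ) : mu X l = #{x ∈ X | x ≤ l} := by
  refine congrArg card (ext fun x => ?_)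
  simp only [mem_inter, mem_Icc, mem_filter]
  exact ⟨fun ⟨hx, _, hxl⟩ => ⟨hx, hxl⟩,
    fun ⟨hx, hxl⟩ => ⟨hx, Nat.one_le_iff_ne_zero.2 (ne_of_mem_of_not_mem hx hX), hxl⟩⟩

lemma mu_le_mu_of_eLE {A B : Finset ℕ} (hA : 0 ∉ A) (hAB : eLE A B) (l : ℕ) :
    mu B l ≤ mu A l := by
  obtain hm | hm := Nat.eq_zero_or_pos (mu B l)
  · omega
  have hmB : mu B l ≤ #B := (mu_le_card_filter B l).trans (card_filter_le _ _)
  have hB : nth B (mu B l) ≤ l :=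
    (nth_le_iff_le_card_filter B hm hmB l).2 (mu_le_card_filter B l)
  rw [mu_eq_card_filter hA]
  exact (nth_le_iff_le_card_filter A hm (hAB.1 ▸ hmB) l).1 ((hAB.2 _ hm hmB).trans hB)

lemma inter_nonempty_of_lt_mu_add_mu {A B : Finset ℕ} {l : ℕ} (h : l < mu A l + mu B l) :
    (A ∩ B).Nonempty :=
  (inter_nonempty_of_card_lt_card_add_card (s := Icc 1 l) inter_subset_right inter_subset_right
    (by simpa [mu] using h)).mono (inter_subset_inter inter_subset_left inter_subset_left)

theorem stmt4_general (n : ℕ) (G H : Finset ℕ)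
    (h : ∃ l ∈ Finset.Icc 1 n, l < mu G l + mu H l) : sInt n G H := by
  intro G' H' hG' hH' hGG' hHH'
  obtain ⟨l, -, hl⟩ := h
  have zero_notMem : ∀ X ⊆ Icc 1 n, 0 ∉ X := fun X hX h0 => by simpa using hX h0
  have hGl := mu_le_mu_of_eLE (zero_notMem G' hG') hGG' l
  have hHl := mu_le_mu_of_eLE (zero_notMem H' hH') hHH' l
  exact inter_nonempty_of_lt_mu_add_mu (l := l) (by omega)

theorem stmt4 (n k : ℕ) (h4 : 4 ≤ 2 * k) (hn : 2 * k ≤ n) (G H : Finset ℕ)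
    (hG : G ⊆ Finset.Icc 1 n) (hH : H ⊆ Finset.Icc 1 n)
    (hGc : G.card ≤ k) (hHc : H.card ≤ k)
    (h : ∃ l ∈ Finset.Icc 1 n, l < mu G l + mu H l) : sInt n G H :=
  stmt4_general n G H h
end

section
/- Let n, k be positive integers with 4 ≤ 2k ≤ n and let G, H ⊆ [n] with |G| ≤ k, |H| ≤ k. If the families F(G) and F(H) are cross-intersecting, then there exists l ∈ [n] such that μ_G(l) + μ_H(l) > l. -/
/-! Suppose `μ_G(l) + μ_H(l) ≤ l` for every `l`. Merge `G` and `H` into one sorted sequence,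
elements of `G` before equal elements of `H`, and replace every element by its position in it.
This turns `G` and `H` into disjoint sets `A` and `B` whose elements do not exceed the ones they
replace, so `A ⪯ G` and `B ⪯ H`. Since `2k ≤ n`, `A` and `B` extend to disjoint `k`-subsets of
`[n]`, which lie in `F(G)` and `F(H)` respectively. -/

open Finset

lemma nth_succ_eq_orderEmbOfFin (X : Finset ℕ) (i : Fin #X) :
    nth X (i + 1) = X.orderEmbOfFin rfl i := by
  rw [nth, orderEmbOfFin_apply, Nat.add_sub_cancel, List.getD_eq_getElem]; rfl

lemma mu_eq_card_filter_le {X : Finset ℕ} (h0 : 0 ∉ X) (l : ℕ) :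
    mu X l = #{x ∈ X | x ≤ l} := by
  rw [mu]
  congr 1
  ext x
  simp only [mem_inter, mem_Icc, mem_filter]
  constructor
  · rintro ⟨hx, -, hxl⟩; exact ⟨hx, hxl⟩
  · rintro ⟨hx, hxl⟩; exact ⟨hx, Nat.one_le_iff_ne_zero.2 (fun h => h0 (h ▸ hx)), hxl⟩

lemma card_filter_le_eq_card_filter_orderEmbOfFin_le (X : Finset ℕ) (l : ℕ) :
    #{x ∈ X | x ≤ l} = #{i | X.orderEmbOfFin rfl i ≤ l} := by
  conv_lhs => rw [← X.image_orderEmbOfFin_univ rfl, filter_image]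
  exact card_image_of_injective _ (X.orderEmbOfFin rfl).injective

lemma nth_le_iff_le_mu {X : Finset ℕ} (h0 : 0 ∉ X) {i : ℕ} (hi : 1 ≤ i) (hiX : i ≤ #X)
    (l : ℕ) : nth X i ≤ l ↔ i ≤ mu X l := by
  obtain ⟨m, rfl⟩ : ∃ m, i = m + 1 := ⟨i - 1, by omega⟩
  rw [mu_eq_card_filter_le h0, card_filter_le_eq_card_filter_orderEmbOfFin_le,
    nth_succ_eq_orderEmbOfFin X ⟨m, by omega⟩]
  set e := X.orderEmbOfFin rfl
  constructor
  · intro hle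
    calc m + 1 = #(Iic (⟨m, by omega⟩ : Fin #X)) := by simp
      _ ≤ _ := card_le_card fun j hj =>
        mem_filter.2 ⟨mem_univ _, (e.monotone (mem_Iic.1 hj)).trans hle⟩
  · intro hcard
    by_contra! hlt
    have : #{j | e j ≤ l} ≤ #(Iio (⟨m, by omega⟩ : Fin #X)) :=
      card_le_card fun j hj => mem_Iio.2 <| e.lt_iff_lt.1 ((mem_filter.1 hj).2.trans_lt hlt)
    simp only [Fin.card_Iio] at this
    omega

lemma zero_notMem_of_subset_Icc_one {X : Finset ℕ} {n : ℕ} (h : X ⊆ Icc 1 n) : 0 ∉ X :=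
  fun h0 => by simpa using h h0

lemma preceq_of_mu_le {S G : Finset ℕ} (hS : 0 ∉ S) (hG : 0 ∉ G) (hcard : #G ≤ #S)
    (hmu : ∀ l, mu G l ≤ mu S l) : preceq S G := by
  refine ⟨hcard, fun i hi hiG => ?_⟩
  rw [nth_le_iff_le_mu hS hi (hiG.trans hcard)]
  exact ((nth_le_iff_le_mu hG hi hiG _).1 le_rfl).trans (hmu _)

lemma mu_monotone (X : Finset ℕ) : Monotone (mu X) := fun _ _ h =>
  card_le_card (inter_subset_inter_left (Icc_subset_Icc_right h))

lemma mu_le_mu_of_subset {X Y : Finset ℕ} (h : X ⊆ Y) (l : ℕ) : mu X l ≤ mu Y l :=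
  card_le_card (inter_subset_inter_right h)

lemma mu_lt_mu_of_mem {X : Finset ℕ} {x y : ℕ} (hy : y ∈ X) (hy1 : 1 ≤ y) (hxy : x < y) :
    mu X x < mu X y := by
  refine card_lt_card ((ssubset_iff_of_subset ?_).2 ⟨y, ?_, ?_⟩)
  · exact inter_subset_inter_left (Icc_subset_Icc_right hxy.le)
  · simp [hy, hy1]
  · simp [hxy]

lemma mu_le_mu_image {X : Finset ℕ} {f : ℕ → ℕ} (hf : ∀ x ∈ X, 1 ≤ f x ∧ f x ≤ x)
    (hinj : Set.InjOn f X) (l : ℕ) : mu X l ≤ mu (X.image f) l := by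
  refine card_le_card_of_injOn f (fun x hx => ?_) (hinj.mono (by simp))
  simp only [coe_inter, Set.mem_inter_iff, mem_coe, mem_Icc] at hx ⊢
  exact ⟨mem_image_of_mem f hx.1, (hf x hx.1).1, (hf x hx.1).2.trans hx.2.2⟩

section Merge

variable (G H : Finset ℕ)

/- Positions in the sorted merge of `G` and `H` in which an element of `G` precedes an equal
element of `H`: `mergePosLeft` is the position of an element of `G`, `mergePosRight` that of an
element of `H`. -/
def mergePosLeft (x : ℕ) : ℕ := mu G x + mu H (x - 1)

def mergePosRight (x : ℕ) : ℕ := mu G x + mu H x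

variable {G H}

lemma mergePosLeft_strictMonoOn (hG : 0 ∉ G) : StrictMonoOn (mergePosLeft G H) G := by
  intro x _ y hy hxy
  have := mu_lt_mu_of_mem hy (Nat.pos_of_ne_zero (ne_of_mem_of_not_mem hy hG)) hxy
  have := mu_monotone H (Nat.sub_le_sub_right hxy.le 1)
  simp only [mergePosLeft]; omega

lemma mergePosRight_strictMonoOn (hH : 0 ∉ H) : StrictMonoOn (mergePosRight G H) H := by
  intro x _ y hy hxy
  have := mu_lt_mu_of_mem hy (Nat.pos_of_ne_zero (ne_of_mem_of_not_mem hy hH)) hxy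
  have := mu_monotone G hxy.le
  simp only [mergePosRight]; omega

lemma disjoint_image_mergePos (hH : 0 ∉ H) :
    Disjoint (G.image (mergePosLeft G H)) (H.image (mergePosRight G H)) := by
  simp only [disjoint_left, mem_image, not_exists, not_and]
  rintro _ ⟨g, hg, rfl⟩ h hh heq
  simp only [mergePosLeft, mergePosRight] at heq
  rcases le_or_gt g h with hgh | hhg
  · have h1 : 1 ≤ h := Nat.pos_of_ne_zero (ne_of_mem_of_not_mem hh hH)
    have := mu_lt_mu_of_mem hh h1 (show g - 1 < h by omega)
    have := mu_monotone G hgh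
    omega
  · have := mu_lt_mu_of_mem hg (by omega) hhg
    have := mu_monotone H (show h ≤ g - 1 by omega)
    omega

lemma exists_disjoint_mu_le_of_mu_add_mu_le {n : ℕ} (hG : G ⊆ Icc 1 n) (hH : H ⊆ Icc 1 n)
    (hle : ∀ x ∈ G ∪ H, mu G x + mu H x ≤ x) :
    ∃ A B, A ⊆ Icc 1 n ∧ B ⊆ Icc 1 n ∧ Disjoint A B ∧ #A = #G ∧ #B = #H ∧
      (∀ l, mu G l ≤ mu A l) ∧ (∀ l, mu H l ≤ mu B l) := by
  have hG0 := zero_notMem_of_subset_Icc_one hG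
  have hH0 := zero_notMem_of_subset_Icc_one hH
  have hinjG := (mergePosLeft_strictMonoOn (H := H) hG0).injOn
  have hinjH := (mergePosRight_strictMonoOn (G := G) hH0).injOn
  have hboundG : ∀ g ∈ G, 1 ≤ mergePosLeft G H g ∧ mergePosLeft G H g ≤ g := fun g hg => by
    have hg1 := (mem_Icc.1 (hG hg)).1
    have := mu_lt_mu_of_mem hg hg1 hg1
    have := mu_monotone H (Nat.sub_le g 1)
    have := hle g (mem_union_left H hg)
    simp only [mergePosLeft]; omega
  have hboundH : ∀ h ∈ H, 1 ≤ mergePosRight G H h ∧ mergePosRight G H h ≤ h := fun h hh => by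
    have hh1 := (mem_Icc.1 (hH hh)).1
    have := mu_lt_mu_of_mem hh hh1 hh1
    have := hle h (mem_union_right G hh)
    simp only [mergePosRight]; omega
  have himage {X : Finset ℕ} {f : ℕ → ℕ} (hX : X ⊆ Icc 1 n) (hf : ∀ x ∈ X, 1 ≤ f x ∧ f x ≤ x) :
      X.image f ⊆ Icc 1 n := by
    simp only [image_subset_iff, mem_Icc]
    exact fun x hx => ⟨(hf x hx).1, (hf x hx).2.trans (mem_Icc.1 (hX hx)).2⟩
  exact ⟨_, _, himage hG hboundG, himage hH hboundH, disjoint_image_mergePos hH0,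
    card_image_of_injOn hinjG, card_image_of_injOn hinjH,
    mu_le_mu_image hboundG hinjG, mu_le_mu_image hboundH hinjH⟩

end Merge

lemma exists_disjoint_supersets_card_eq {α : Type*} [DecidableEq α] {u A B : Finset α} {a b : ℕ}
    (hA : A ⊆ u) (hB : B ⊆ u) (hAB : Disjoint A B) (ha : #A ≤ a) (hb : #B ≤ b)
    (hab : a + b ≤ #u) :
    ∃ A' B', A ⊆ A' ∧ B ⊆ B' ∧ A' ⊆ u ∧ B' ⊆ u ∧ Disjoint A' B' ∧ #A' = a ∧ #B' = b := by
  obtain ⟨A', hAA', hA'u, rfl⟩ := exists_subsuperset_card_eq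
    (subset_sdiff.2 ⟨hA, hAB⟩) ha (by rw [card_sdiff_of_subset hB]; omega)
  have hA'u' := (subset_sdiff.1 hA'u)
  obtain ⟨B', hBB', hB'u, rfl⟩ := exists_subsuperset_card_eq
    (subset_sdiff.2 ⟨hB, hA'u'.2.symm⟩) hb (by rw [card_sdiff_of_subset hA'u'.1]; omega)
  have hB'u' := (subset_sdiff.1 hB'u)
  exact ⟨A', B', hAA', hBB', hA'u'.1, hB'u'.1, hB'u'.2.symm, rfl, rfl⟩

lemma mem_Fam_singleton_of_mu_le {n k : ℕ} {G S : Finset ℕ} (hG : G ⊆ Icc 1 n)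
    (hS : S ⊆ Icc 1 n) (hSc : #S = k) (hGS : #G ≤ #S) (hmu : ∀ l, mu G l ≤ mu S l) :
    S ∈ Fam n k {G} :=
  ⟨hS, hSc, G, rfl, preceq_of_mu_le (zero_notMem_of_subset_Icc_one hS)
    (zero_notMem_of_subset_Icc_one hG) hGS hmu⟩

theorem stmt5_general (n k : ℕ) (hn : 2 * k ≤ n) (G H : Finset ℕ)
    (hG : G ⊆ Finset.Icc 1 n) (hH : H ⊆ Finset.Icc 1 n)
    (hGc : G.card ≤ k) (hHc : H.card ≤ k)
    (hcross : ∀ A ∈ Fam n k {G}, ∀ B ∈ Fam n k {H}, (A ∩ B).Nonempty) :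
    ∃ l ∈ Finset.Icc 1 n, l < mu G l + mu H l := by
  by_contra! hsmall
  obtain ⟨A, B, hAn, hBn, hAB, hAc, hBc, hGA, hHB⟩ :=
    exists_disjoint_mu_le_of_mu_add_mu_le hG hH fun x hx => hsmall x (union_subset hG hH hx)
  obtain ⟨A', B', hAA', hBB', hA'n, hB'n, hA'B', hA'c, hB'c⟩ :=
    exists_disjoint_supersets_card_eq hAn hBn hAB (hAc ▸ hGc) (hBc ▸ hHc)
      (by rw [Nat.card_Icc]; omega)
  have hA'fam : A' ∈ Fam n k {G} := mem_Fam_singleton_of_mu_le hG hA'n hA'c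
    (hAc ▸ card_le_card hAA') fun l => (hGA l).trans (mu_le_mu_of_subset hAA' l)
  have hB'fam : B' ∈ Fam n k {H} := mem_Fam_singleton_of_mu_le hH hB'n hB'c
    (hBc ▸ card_le_card hBB') fun l => (hHB l).trans (mu_le_mu_of_subset hBB' l)
  obtain ⟨x, hx⟩ := hcross A' hA'fam B' hB'fam
  exact disjoint_left.1 hA'B' (mem_inter.1 hx).1 (mem_inter.1 hx).2

theorem stmt5 (n k : ℕ) (h4 : 4 ≤ 2 * k) (hn : 2 * k ≤ n) (G H : Finset ℕ)
    (hG : G ⊆ Finset.Icc 1 n) (hH : H ⊆ Finset.Icc 1 n)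
    (hGc : G.card ≤ k) (hHc : H.card ≤ k)
    (hcross : ∀ A ∈ Fam n k {G}, ∀ B ∈ Fam n k {H}, (A ∩ B).Nonempty) :
    ∃ l ∈ Finset.Icc 1 n, l < mu G l + mu H l :=
  stmt5_general n k hn G H hG hH hGc hHc hcross
end

section
/- Let 4 ≤ 2k ≤ n, and let G be a collection of subsets of [n] each of size at most k such that F(n,k,G) is intersecting and nonempty. Then for every G ∈ G that generates a nonempty F(G), the minimum element of G satisfies min(G) ≤ k. -/
open Finset

/-! If every element of `G` exceeded `k`, then `G`'s `i`-th element would be at least `k + i`,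
so both `[1, k]` and `[k + 1, 2k]` would be `⪯ G` and hence members of `F(n, k, 𝒢)`;
being disjoint, they contradict intersection. -/

theorem List.Pairwise.add_succ_le_getElem {l : List ℕ} (hl : l.Pairwise (· < ·)) {a : ℕ}
    (ha : ∀ x ∈ l, a < x) (j : ℕ) (hj : j < l.length) : a + (j + 1) ≤ l[j] := by
  induction l generalizing a j with
  | nil => simp at hj
  | cons x t ih =>
    have hx : a < x := ha x List.mem_cons_self
    rw [List.pairwise_cons] at hl
    cases j with
    | zero => simpa using hx
    | succ j =>
      have := ih hl.2 hl.1 j (by simpa using hj)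
      simp only [List.getElem_cons_succ]
      omega

theorem Finset.sort_Icc (a b : ℕ) : (Icc a b).sort (· ≤ ·) = List.range' a (b + 1 - a) := by
  have h : Icc a b = (List.range' a (b + 1 - a)).toFinset := by
    ext x
    simp only [mem_Icc, List.mem_toFinset, List.mem_range'_1]
    omega
  rw [h, List.toFinset_sort _ List.nodup_range']
  exact List.pairwise_le_range'

theorem nth_Icc {a m i : ℕ} (hi : 1 ≤ i) (him : i ≤ m) : nth (Icc (a + 1) (a + m)) i = a + i := by
  rw [nth, sort_Icc, List.getD_eq_getElem _ _ (by simp; omega), List.getElem_range']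
  omega

theorem add_le_nth {A : Finset ℕ} {a i : ℕ} (hA : ∀ x ∈ A, a < x) (hi : 1 ≤ i) (hiA : i ≤ #A) :
    a + i ≤ nth A i := by
  have hlen : i - 1 < (A.sort (· ≤ ·)).length := by rw [length_sort]; omega
  have := A.sortedLT_sort.pairwise.add_succ_le_getElem (a := a)
    (fun x hx => hA x ((mem_sort _).mp hx)) (i - 1) hlen
  rw [nth, List.getD_eq_getElem _ _ hlen]
  omega

theorem Icc_preceq {G : Finset ℕ} {b m : ℕ} (hcard : #G ≤ m) (hG : ∀ x ∈ G, b < x) :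
    preceq (Icc (b + 1) (b + m)) G := by
  refine ⟨by simpa using hcard, fun i hi hiG => ?_⟩
  rw [nth_Icc hi (hiG.trans hcard)]
  exact add_le_nth hG hi hiG

theorem Icc_mem_Fam {n k b : ℕ} {𝒢 : Set (Finset ℕ)} {G : Finset ℕ} (hG𝒢 : G ∈ 𝒢)
    (hcard : #G ≤ k) (hG : ∀ x ∈ G, b < x) (hbk : b + k ≤ n) :
    Icc (b + 1) (b + k) ∈ Fam n k 𝒢 := by
  refine ⟨fun x hx => ?_, by simp, G, hG𝒢, Icc_preceq hcard hG⟩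
  simp only [mem_Icc] at hx ⊢
  omega

theorem stmt11_general (n k : ℕ) (hn : 2 * k ≤ n) (𝒢 : Set (Finset ℕ))
    (h𝒢 : ∀ G ∈ 𝒢, G ⊆ Finset.Icc 1 n ∧ G.card ≤ k)
    (hint : IsIntersecting (Fam n k 𝒢))
    (G : Finset ℕ) (hG : G ∈ 𝒢) (hGne : G.Nonempty) :
    G.min' hGne ≤ k := by
  by_contra! hmin
  have hGk : ∀ x ∈ G, k < x := fun x hx => hmin.trans_le (G.min'_le x hx)
  have hcard := (h𝒢 G hG).2
  have hlow : Icc (0 + 1) (0 + k) ∈ Fam n k 𝒢 :=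
    Icc_mem_Fam hG hcard (fun x hx => (hGk x hx).trans_le' k.zero_le) (by omega)
  have hhigh : Icc (k + 1) (k + k) ∈ Fam n k 𝒢 := Icc_mem_Fam hG hcard hGk (by omega)
  obtain ⟨x, hx⟩ := hint _ hlow _ hhigh
  simp only [mem_inter, mem_Icc] at hx
  omega

theorem stmt11 (n k : ℕ) (h4 : 4 ≤ 2 * k) (hn : 2 * k ≤ n) (𝒢 : Set (Finset ℕ))
    (h𝒢 : ∀ G ∈ 𝒢, G ⊆ Finset.Icc 1 n ∧ G.card ≤ k)
    (hint : IsIntersecting (Fam n k 𝒢)) (hne : (Fam n k 𝒢).Nonempty)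
    (G : Finset ℕ) (hG : G ∈ 𝒢) (hGne : G.Nonempty) (hFG : (Fam n k {G}).Nonempty) :
    G.min' hGne ≤ k :=
  stmt11_general n k hn 𝒢 h𝒢 hint G hG hGne
end

section
/- Let 4 ≤ 2k ≤ n and let G be a collection of subsets of [n], each of size at most k and each having a well-defined type (i.e., min(G) ≤ k for all G ∈ G). If F(n,k,G) is a left-compressed intersecting family, then F(n,k,π(G)) is also intersecting and F(n,k,G) ⊆ F(n,k,π(G)), where π(G) = {π(G) : G ∈ G}. -/
open Finset

/-! Let `A ⪯ π(W)` where `W` has type `r`. The `r` smallest elements of `A` are at most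
`a_r ≤ w_r < k + r ≤ 2k`, and any `k`-subset `A'` of `[2k]` containing them satisfies `A' ⪯ W`:
its first `r` entries are bounded by those of `A`, and for `j > r` its `j`-th entry is at most
`2k - (k - j) = k + j ≤ w_j`. Two disjoint members `A ⪯ π(W)`, `B ⪯ π(V)` would therefore give
disjoint heads inside `[2k]`, which extend to a partition of `[2k]` into two `k`-sets of
`F(n,k,𝒢)`, contradicting that this family is intersecting. The inclusion holds because `π(G)`
is an initial segment of `G`. -/

lemma nth_eq_orderEmbOfFin (A : Finset ℕ) {j : ℕ} (h1 : 1 ≤ j) (h2 : j ≤ #A) :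
    nth A j = A.orderEmbOfFin rfl ⟨j - 1, by omega⟩ := by
  rw [orderEmbOfFin_apply, nth, List.getD_eq_getElem?_getD, List.getElem?_eq_getElem]
  rfl

lemma nth_le_iff_le_card_filter_s13 (A : Finset ℕ) {j : ℕ} (h1 : 1 ≤ j) (h2 : j ≤ #A) (y : ℕ) :
    nth A j ≤ y ↔ j ≤ #{x ∈ A | x ≤ y} := by
  set f := A.orderEmbOfFin rfl
  set i₀ : Fin #A := ⟨j - 1, by omega⟩
  have hcard : #{x ∈ A | x ≤ y} = #{i | f i ≤ y} := by
    conv_lhs => rw [← map_orderEmbOfFin_univ A rfl]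
    rw [filter_map, card_map]
    rfl
  rw [nth_eq_orderEmbOfFin A h1 h2, hcard]
  constructor
  · intro h
    calc j = #(Iic i₀) := by rw [Fin.card_Iic]; simp [i₀]; omega
      _ ≤ _ := card_le_card fun i hi => by
        simp only [mem_Iic, mem_filter, mem_univ, true_and] at hi ⊢
        exact (f.monotone hi).trans h
  · intro h
    by_contra! hlt
    have : #{i | f i ≤ y} ≤ #(Iio i₀) := card_le_card fun i hi => by
      simp only [mem_Iio, mem_filter, mem_univ, true_and] at hi ⊢
      exact f.lt_iff_lt.1 (hi.trans_lt hlt)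
    rw [Fin.card_Iio] at this
    simp [i₀] at this
    omega

lemma nth_le_nth_of_subset {P A : Finset ℕ} (hPA : P ⊆ A) {j : ℕ} (h1 : 1 ≤ j) (h2 : j ≤ #P) :
    nth A j ≤ nth P j := by
  rw [nth_le_iff_le_card_filter_s13 A h1 (h2.trans (card_le_card hPA))]
  exact ((nth_le_iff_le_card_filter_s13 P h1 h2 _).1 le_rfl).trans
    (card_le_card (filter_subset_filter _ hPA))

lemma le_nth_card {A : Finset ℕ} {x : ℕ} (hx : x ∈ A) : x ≤ nth A #A := by
  have hA : 1 ≤ #A := card_pos.2 ⟨x, hx⟩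
  have := (nth_le_iff_le_card_filter_s13 A hA le_rfl _).1 le_rfl
  exact filter_card_eq ((card_filter_le _ _).antisymm this) x hx

lemma nth_add_card_sub_le {A : Finset ℕ} {m j : ℕ} (hA : A ⊆ Icc 1 m) (h1 : 1 ≤ j) (h2 : j ≤ #A) :
    nth A j + (#A - j) ≤ m := by
  have hAm : #A ≤ m := by simpa using card_le_card hA
  suffices nth A j ≤ m - (#A - j) by omega
  rw [nth_le_iff_le_card_filter_s13 A h1 h2]
  have hbig : #{x ∈ A | ¬ x ≤ m - (#A - j)} ≤ #A - j := by
    calc _ ≤ #(Ioc (m - (#A - j)) m) := card_le_card fun x hx => by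
          simp only [mem_filter] at hx
          have := hA hx.1
          simp only [mem_Icc, mem_Ioc] at this ⊢
          omega
      _ = #A - j := by rw [Nat.card_Ioc]; omega
  have := card_filter_add_card_filter_not (s := A) (· ≤ m - (#A - j))
  omega

def initSeg (A : Finset ℕ) (r : ℕ) : Finset ℕ := ((A.sort (· ≤ ·)).take r).toFinset

lemma piG_eq_initSeg (k : ℕ) (G : Finset ℕ) : piG k G = initSeg G (typeOf k G) := rfl

lemma initSeg_subset (A : Finset ℕ) (r : ℕ) : initSeg A r ⊆ A := fun _ hx =>
  (mem_sort _).1 (List.mem_of_mem_take (List.mem_toFinset.1 hx))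

lemma sort_initSeg (A : Finset ℕ) (r : ℕ) :
    (initSeg A r).sort (· ≤ ·) = (A.sort (· ≤ ·)).take r :=
  (List.toFinset_sort _ ((List.take_sublist _ _).nodup (sort_nodup _ _))).2
    ((pairwise_sort _ _).sublist (List.take_sublist _ _))

lemma card_initSeg (A : Finset ℕ) (r : ℕ) : #(initSeg A r) = min r #A := by
  rw [← length_sort (· ≤ ·), sort_initSeg, List.length_take, length_sort]

lemma card_initSeg_le (A : Finset ℕ) (r : ℕ) : #(initSeg A r) ≤ r :=
  (card_initSeg A r).trans_le (min_le_left _ _)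

lemma nth_initSeg (A : Finset ℕ) {r j : ℕ} (h1 : 1 ≤ j) (hj : j ≤ r) :
    nth (initSeg A r) j = nth A j := by
  rw [nth, nth, sort_initSeg, List.getD_eq_getElem?_getD, List.getElem?_take_of_lt (by omega),
    ← List.getD_eq_getElem?_getD]

lemma preceq_initSeg {S G : Finset ℕ} (h : preceq S G) (r : ℕ) : preceq S (initSeg G r) := by
  have hcard : #(initSeg G r) ≤ #G := card_le_card (initSeg_subset G r)
  refine ⟨hcard.trans h.1, fun j h1 hj => ?_⟩
  rw [nth_initSeg G h1 (hj.trans (card_initSeg_le G r))]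
  exact h.2 j h1 (hj.trans hcard)

lemma typeOf_le_card (k : ℕ) (G : Finset ℕ) : typeOf k G ≤ #G :=
  Finset.sup_le fun _ hr => Nat.lt_succ_iff.1 (mem_range.1 (mem_filter.1 hr).1)

lemma typeOf_spec {k : ℕ} {G : Finset ℕ} (hG : ∃ x ∈ G, x ≤ k) :
    1 ≤ typeOf k G ∧ nth G (typeOf k G) < k + typeOf k G := by
  obtain ⟨x, hxG, hxk⟩ := hG
  have hG1 : 1 ≤ #G := card_pos.2 ⟨x, hxG⟩
  have hmin : nth G 1 ≤ k := (nth_le_iff_le_card_filter_s13 G le_rfl hG1 k).2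
    (card_pos.2 ⟨x, mem_filter.2 ⟨hxG, hxk⟩⟩)
  have hne : ({r ∈ range (#G + 1) | 1 ≤ r ∧ nth G r < k + r} : Finset ℕ).Nonempty :=
    ⟨1, mem_filter.2 ⟨mem_range.2 (by omega), le_rfl, by omega⟩⟩
  obtain ⟨r, hr, hsup⟩ := exists_mem_eq_sup _ hne id
  rw [typeOf, hsup]
  exact (mem_filter.1 hr).2

lemma add_le_nth_of_typeOf_lt {k j : ℕ} {G : Finset ℕ} (hj : typeOf k G < j) (hjG : j ≤ #G) :
    k + j ≤ nth G j := by
  by_contra! hlt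
  have : j ≤ typeOf k G :=
    le_sup (f := id) (mem_filter.2 ⟨mem_range.2 (Nat.lt_succ_of_le hjG), by omega, hlt⟩)
  omega

lemma card_piG (k : ℕ) (G : Finset ℕ) : #(piG k G) = typeOf k G := by
  rw [piG_eq_initSeg, card_initSeg, min_eq_left (typeOf_le_card k G)]

lemma nth_piG (k : ℕ) (G : Finset ℕ) {j : ℕ} (h1 : 1 ≤ j) (hj : j ≤ typeOf k G) :
    nth (piG k G) j = nth G j :=
  nth_initSeg G h1 hj

lemma initSeg_typeOf_subset_Icc {n k : ℕ} {A W : Finset ℕ} (hWk : #W ≤ k) (hW : ∃ x ∈ W, x ≤ k)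
    (hAn : A ⊆ Icc 1 n) (hA : preceq A (piG k W)) :
    initSeg A (typeOf k W) ⊆ Icc 1 (2 * k) := by
  obtain ⟨hr1, hrW⟩ := typeOf_spec hW
  have hrA : typeOf k W ≤ #A := card_piG k W ▸ hA.1
  have hPr : #(initSeg A (typeOf k W)) = typeOf k W := by rw [card_initSeg, min_eq_left hrA]
  intro x hx
  have hx1 : 1 ≤ x := (mem_Icc.1 (hAn (initSeg_subset A _ hx))).1
  have hxA : x ≤ nth A (typeOf k W) := by
    simpa only [hPr, nth_initSeg A hr1 le_rfl] using le_nth_card hx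
  have hAW : nth A (typeOf k W) ≤ nth W (typeOf k W) :=
    nth_piG k W hr1 le_rfl ▸ hA.2 _ hr1 (card_piG k W).ge
  have := typeOf_le_card k W
  exact mem_Icc.2 ⟨hx1, by omega⟩

lemma preceq_of_initSeg_typeOf_subset {k : ℕ} {A A' W : Finset ℕ} (hWk : #W ≤ k)
    (hA : preceq A (piG k W)) (hPA' : initSeg A (typeOf k W) ⊆ A') (hA' : A' ⊆ Icc 1 (2 * k))
    (hA'k : #A' = k) : preceq A' W := by
  have hrA : typeOf k W ≤ #A := card_piG k W ▸ hA.1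
  refine ⟨hA'k ▸ hWk, fun j hj1 hjW => ?_⟩
  rcases le_or_gt j (typeOf k W) with hjr | hjr
  · calc nth A' j ≤ nth (initSeg A (typeOf k W)) j :=
          nth_le_nth_of_subset hPA' hj1 (by rw [card_initSeg]; omega)
      _ = nth A j := nth_initSeg A hj1 hjr
      _ ≤ nth (piG k W) j := hA.2 j hj1 (by rw [card_piG]; exact hjr)
      _ = nth W j := nth_piG k W hj1 hjr
  · have := nth_add_card_sub_le hA' hj1 (by omega)
    have := add_le_nth_of_typeOf_lt hjr hjW
    omega

lemma exists_subset_card_eq_sdiff_card_eq {α : Type*} [DecidableEq α] {U P Q : Finset α} {k : ℕ}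
    (hU : #U = 2 * k) (hP : P ⊆ U) (hQ : Q ⊆ U) (hPQ : Disjoint P Q) (hPk : #P ≤ k)
    (hQk : #Q ≤ k) : ∃ A ⊆ U, P ⊆ A ∧ Q ⊆ U \ A ∧ #A = k ∧ #(U \ A) = k := by
  obtain ⟨A, hPA, hAUQ, hAk⟩ := exists_subsuperset_card_eq (subset_sdiff.2 ⟨hP, hPQ⟩) hPk
    (by rw [card_sdiff_of_subset hQ]; omega)
  have hAU : A ⊆ U := hAUQ.trans sdiff_subset
  refine ⟨A, hAU, hPA, subset_sdiff.2 ⟨hQ, (disjoint_of_subset_left hAUQ sdiff_disjoint).symm⟩,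
    hAk, ?_⟩
  rw [card_sdiff_of_subset hAU]
  omega

lemma Fam_subset_Fam_piG (n k : ℕ) (𝒢 : Set (Finset ℕ)) : Fam n k 𝒢 ⊆ Fam n k (piG k '' 𝒢) :=
  fun _ ⟨hS, hSk, G, hG, hSG⟩ => ⟨hS, hSk, piG k G, ⟨G, hG, rfl⟩, preceq_initSeg hSG _⟩

theorem stmt13_general (n k : ℕ) (hn : 2 * k ≤ n) (𝒢 : Set (Finset ℕ))
    (h𝒢 : ∀ G ∈ 𝒢, G ⊆ Finset.Icc 1 n ∧ G.card ≤ k ∧ ∃ x ∈ G, x ≤ k)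
    (hint : IsIntersecting (Fam n k 𝒢)) :
    IsIntersecting (Fam n k (piG k '' 𝒢)) ∧ Fam n k 𝒢 ⊆ Fam n k (piG k '' 𝒢) := by
  refine ⟨?_, Fam_subset_Fam_piG n k 𝒢⟩
  rintro A ⟨hAn, -, _, ⟨W, hW, rfl⟩, hAW⟩ B ⟨hBn, -, _, ⟨V, hV, rfl⟩, hBV⟩
  by_contra hAB
  obtain ⟨-, hWk, hWmin⟩ := h𝒢 W hW
  obtain ⟨-, hVk, hVmin⟩ := h𝒢 V hV
  have hPQ : Disjoint (initSeg A (typeOf k W)) (initSeg B (typeOf k V)) :=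
    (disjoint_iff_inter_eq_empty.2 (not_nonempty_iff_eq_empty.1 hAB)).mono
      (initSeg_subset _ _) (initSeg_subset _ _)
  have hcard (X G : Finset ℕ) (hG : #G ≤ k) : #(initSeg X (typeOf k G)) ≤ k :=
    (card_initSeg_le _ _).trans ((typeOf_le_card k G).trans hG)
  obtain ⟨A', hA', hPA', hQB', hA'k, hB'k⟩ := exists_subset_card_eq_sdiff_card_eq
    (by rw [Nat.card_Icc]; omega) (initSeg_typeOf_subset_Icc hWk hWmin hAn hAW)
    (initSeg_typeOf_subset_Icc hVk hVmin hBn hBV) hPQ (hcard A W hWk) (hcard B V hVk)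
  have hmem {X G : Finset ℕ} (hX : X ⊆ Icc 1 (2 * k)) (hXk : #X = k) (hG : G ∈ 𝒢)
      (hXG : preceq X G) : X ∈ Fam n k 𝒢 :=
    ⟨hX.trans (Icc_subset_Icc_right hn), hXk, G, hG, hXG⟩
  have hA'B' := hint A' (hmem hA' hA'k hW (preceq_of_initSeg_typeOf_subset hWk hAW hPA' hA' hA'k))
    _ (hmem sdiff_subset hB'k hV (preceq_of_initSeg_typeOf_subset hVk hBV hQB' sdiff_subset hB'k))
  exact not_nonempty_empty (inter_sdiff_self A' _ ▸ hA'B')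

theorem stmt13 (n k : ℕ) (h4 : 4 ≤ 2 * k) (hn : 2 * k ≤ n) (𝒢 : Set (Finset ℕ))
    (h𝒢 : ∀ G ∈ 𝒢, G ⊆ Finset.Icc 1 n ∧ G.card ≤ k ∧ ∃ x ∈ G, x ≤ k)
    (hlc : ∀ A ∈ Fam n k 𝒢, ∀ B, B ⊆ Finset.Icc 1 n → B.card = k → eLE B A → B ∈ Fam n k 𝒢)
    (hint : IsIntersecting (Fam n k 𝒢)) :
    IsIntersecting (Fam n k (piG k '' 𝒢)) ∧ Fam n k 𝒢 ⊆ Fam n k (piG k '' 𝒢) :=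
  stmt13_general n k hn 𝒢 h𝒢 hint
end

section
/- Let 4 ≤ 2k ≤ n and let G', H' ⊆ [n] have sizes at most k with min(G') ≤ k, min(H') ≤ k. Suppose μ_{G'}(l) + μ_{H'}(l) > l for some l ∈ [n]. If G' has type r (the largest index with g_r < k + r), then any such l satisfies l ≤ k + r − 1, and moreover μ_{π(G')}(l) = μ_{G'}(l), so that μ_{π(G')}(l) + μ_{π(H')}(l) > l. -/
open Finset

/-!
The elements of `X` that are at most `l` form an initial segment `x_1 < ⋯ < x_m` of `X`. If
`l < k + m` then `x_m ≤ l < k + m`, so the type of `X` is at least `m` and `π(X)` contains the whole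
segment; hence `μ_{π(X)}(l) = μ_X(l)`. The hypothesis `μ_{G'}(l) + μ_{H'}(l) > l` together with
`μ_{H'}(l) ≤ |H'| ≤ k` gives `l < k + μ_{G'}(l) ≤ k + m` for `G'`, and symmetrically for `H'`.
-/

theorem List.Pairwise.filter_le_eq_take {α : Type*} [Preorder α] [DecidableLE α] (l : α) :
    ∀ {s : List α}, s.Pairwise (· ≤ ·) → s.filter (· ≤ l) = s.take (s.filter (· ≤ l)).length
  | [], _ => rfl
  | x :: t, hs => by
    obtain ⟨hx, ht⟩ := List.pairwise_cons.mp hs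
    by_cases hxl : x ≤ l
    · simp [hxl, ← ht.filter_le_eq_take l]
    · have htail : t.filter (· ≤ l) = [] :=
        List.filter_eq_nil_iff.mpr fun y hy hyl => hxl ((hx y hy).trans (by simpa using hyl))
      simp [hxl, htail]

section InitialSegment

variable (k l : ℕ) (X : Finset ℕ)

lemma card_filter_le_eq_length_filter_sort :
    #(X.filter (· ≤ l)) = ((X.sort (· ≤ ·)).filter (· ≤ l)).length := by
  rw [← List.toFinset_card_of_nodup ((X.sort_nodup _).filter _), List.toFinset_filter,
    X.sort_toFinset]
  simp

lemma filter_le_eq_take_sort :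
    (X.sort (· ≤ ·)).filter (· ≤ l) = (X.sort (· ≤ ·)).take #(X.filter (· ≤ l)) := by
  rw [card_filter_le_eq_length_filter_sort]
  exact (X.pairwise_sort _).filter_le_eq_take l

lemma nth_card_filter_le_le (hm : 0 < #(X.filter (· ≤ l))) : nth X #(X.filter (· ≤ l)) ≤ l := by
  set s := X.sort (· ≤ ·)
  set m := #(X.filter (· ≤ l))
  have hlen : m - 1 < (s.filter (· ≤ l)).length := by
    rw [← card_filter_le_eq_length_filter_sort]; omega
  have hnth : nth X m = (s.filter (· ≤ l))[m - 1] := by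
    rw [nth, List.getD_eq_getElem?_getD, ← List.getD_eq_getElem _ 0, List.getD_eq_getElem?_getD,
      filter_le_eq_take_sort, List.getElem?_take, if_pos (by omega)]
  rw [hnth]
  simpa using List.of_mem_filter (List.getElem_mem hlen)

lemma card_filter_le_le_typeOf (h : l < k + #(X.filter (· ≤ l))) :
    #(X.filter (· ≤ l)) ≤ typeOf k X := by
  rcases Nat.eq_zero_or_pos #(X.filter (· ≤ l)) with hm | hm
  · rw [hm]; exact Nat.zero_le _
  · have hcard : #(X.filter (· ≤ l)) ≤ #X := card_filter_le _ _
    have hnth := nth_card_filter_le_le l X hm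
    exact Finset.le_sup (f := id) (b := #(X.filter (· ≤ l)))
      (mem_filter.mpr ⟨mem_range.mpr (by omega), hm, by omega⟩)

lemma filter_le_subset_piG (h : l < k + #(X.filter (· ≤ l))) : X.filter (· ≤ l) ⊆ piG k X := by
  intro x hx
  obtain ⟨hxX, hxl⟩ := mem_filter.mp hx
  have hxs : x ∈ (X.sort (· ≤ ·)).filter (· ≤ l) :=
    List.mem_filter.mpr ⟨(X.mem_sort _).mpr hxX, by simpa using hxl⟩
  rw [filter_le_eq_take_sort] at hxs
  exact List.mem_toFinset.mpr
    (List.take_subset_take_left _ (card_filter_le_le_typeOf k l X h) hxs)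

lemma piG_subset : piG k X ⊆ X := fun _ hx =>
  (X.mem_sort (· ≤ ·)).mp (List.take_subset _ _ (List.mem_toFinset.mp hx))

lemma inter_Icc_subset_filter_le : X ∩ Icc 1 l ⊆ X.filter (· ≤ l) := fun _ hx =>
  mem_filter.mpr ⟨(mem_inter.mp hx).1, (mem_Icc.mp (mem_inter.mp hx).2).2⟩

lemma mu_le_card_filter_le : mu X l ≤ #(X.filter (· ≤ l)) :=
  card_le_card (inter_Icc_subset_filter_le l X)

lemma mu_le_card : mu X l ≤ #X := card_le_card inter_subset_left

variable {k l X}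

lemma lt_add_card_filter_le (h : l < k + mu X l) : l < k + #(X.filter (· ≤ l)) := by
  have := mu_le_card_filter_le l X
  omega

lemma mu_le_typeOf (h : l < k + mu X l) : mu X l ≤ typeOf k X :=
  (mu_le_card_filter_le l X).trans (card_filter_le_le_typeOf k l X (lt_add_card_filter_le h))

lemma mu_piG_eq (h : l < k + mu X l) : mu (piG k X) l = mu X l :=
  le_antisymm (card_le_card (inter_subset_inter_right (piG_subset k X))) <| card_le_card <|
    subset_inter ((inter_Icc_subset_filter_le l X).trans
      (filter_le_subset_piG k l X (lt_add_card_filter_le h))) inter_subset_right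

end InitialSegment

theorem stmt14_general (k : ℕ) (G' H' : Finset ℕ)
    (hGc : G'.card ≤ k) (hHc : H'.card ≤ k)
    (l : ℕ) (h : l < mu G' l + mu H' l) :
    l ≤ k + typeOf k G' - 1 ∧ mu (piG k G') l = mu G' l ∧
      l < mu (piG k G') l + mu (piG k H') l := by
  have hG : l < k + mu G' l := by have := (mu_le_card l H').trans hHc; omega
  have hH : l < k + mu H' l := by have := (mu_le_card l G').trans hGc; omega
  have htype := mu_le_typeOf hG
  refine ⟨by omega, mu_piG_eq hG, ?_⟩
  rwa [mu_piG_eq hG, mu_piG_eq hH]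

theorem stmt14 (n k : ℕ) (h4 : 4 ≤ 2 * k) (hn : 2 * k ≤ n) (G' H' : Finset ℕ)
    (hG : G' ⊆ Finset.Icc 1 n) (hH : H' ⊆ Finset.Icc 1 n)
    (hGc : G'.card ≤ k) (hHc : H'.card ≤ k)
    (hGm : ∃ x ∈ G', x ≤ k) (hHm : ∃ x ∈ H', x ≤ k)
    (l : ℕ) (hl : l ∈ Finset.Icc 1 n) (h : l < mu G' l + mu H' l) :
    l ≤ k + typeOf k G' - 1 ∧ mu (piG k G') l = mu G' l ∧
      l < mu (piG k G') l + mu (piG k H') l :=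
  stmt14_general k G' H' hGc hHc l h
end

section
/- Let A be a left-compressed intersecting family of k-subsets of [n] with 4 ≤ 2k ≤ n. Then for any A = {a_1 < ... < a_k} and B = {b_1 < ... < b_k} in A, there exist indices 1 ≤ i, j ≤ k such that i + j > max{a_i, b_j}. -/
open Finset

/-! Suppose that `i + j ≤ max a_i b_j` for all `i, j ≤ k`. Fix `j`, put `m = b_j` and
`t = |A ∩ [m]|`. If `t > 0` then `a_t ≤ m`, so `t + j ≤ m`; hence `[m] \ A` has at least `j`
elements, i.e. the `j`-th element of `[n] \ A` is at most `b_j`. So the `k` smallest elements of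
`[n] \ A` (there are enough since `2k ≤ n`) form a set `D ≤ B`, which lies in `𝒜` by
left-compression but is disjoint from `A`. -/

lemma zero_notMem_of_subset_Icc {n : ℕ} {s : Finset ℕ} (hs : s ⊆ Icc 1 n) : 0 ∉ s :=
  fun h => by simpa using hs h

lemma mu_le (s : Finset ℕ) (m : ℕ) : mu s m ≤ m :=
  (card_le_card inter_subset_right).trans (Nat.card_Icc 1 m).le

lemma mu_le_card_s15 (s : Finset ℕ) (m : ℕ) : mu s m ≤ #s :=
  card_le_card inter_subset_left

lemma mu_eq_card {n : ℕ} {s : Finset ℕ} (hs : s ⊆ Icc 1 n) : mu s n = #s := by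
  rw [mu, inter_eq_left.mpr hs]

lemma mu_sdiff_add_mu {n m : ℕ} (A : Finset ℕ) (hm : m ≤ n) :
    mu (Icc 1 n \ A) m + mu A m = m := by
  have hIcc : Icc 1 n ∩ Icc 1 m = Icc 1 m := inter_eq_right.mpr (Icc_subset_Icc_right hm)
  rw [mu, mu, sdiff_inter_right_comm, hIcc, inter_comm, card_sdiff_add_card_inter, Nat.card_Icc]
  omega

lemma toFinset_finite_mem (s : Finset ℕ) (hf : (Set.ofPred (· ∈ s)).Finite) : hf.toFinset = s := by
  ext; simp

lemma nth_eq_nat_nth (s : Finset ℕ) (j : ℕ) : nth s j = Nat.nth (· ∈ s) (j - 1) := by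
  have hf : (Set.ofPred (· ∈ s)).Finite := s.finite_toSet
  rw [Nat.nth_eq_getD_sort hf, toFinset_finite_mem]
  rfl

lemma count_mem_eq_mu {s : Finset ℕ} (h0 : 0 ∉ s) (m : ℕ) :
    Nat.count (· ∈ s) (m + 1) = mu s m := by
  rw [Nat.count_eq_card_filter_range, mu]
  congr 1
  ext x
  simp only [mem_filter, mem_range, mem_inter, mem_Icc]
  constructor
  · rintro ⟨hxm, hxs⟩
    exact ⟨hxs, Nat.pos_of_ne_zero (ne_of_mem_of_not_mem hxs h0), by omega⟩
  · rintro ⟨hxs, -, hxm⟩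
    exact ⟨by omega, hxs⟩

lemma nth_le_iff_le_mu_s15 {s : Finset ℕ} (h0 : 0 ∉ s) {j m : ℕ} (hj : 1 ≤ j) (hjs : j ≤ #s) :
    nth s j ≤ m ↔ j ≤ mu s m := by
  have hcard : ∀ hf : (Set.ofPred (· ∈ s)).Finite, j - 1 < #hf.toFinset := fun hf => by
    rw [toFinset_finite_mem]
    omega
  rw [nth_eq_nat_nth, ← count_mem_eq_mu h0]
  constructor
  · intro h
    have := Nat.count_monotone (· ∈ s) (Nat.add_le_add_right h 1)
    rw [Nat.count_nth_succ hcard] at this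
    omega
  · intro h
    have := Nat.nth_lt_of_lt_count (p := (· ∈ s)) (n := m + 1) (k := j - 1) (by omega)
    omega

lemma exists_subset_card_eq_forall_nth_eq (s : Finset ℕ) {k : ℕ} (hk : k ≤ #s) :
    ∃ t ⊆ s, #t = k ∧ ∀ j, 1 ≤ j → j ≤ k → nth t j = nth s j := by
  set l := s.sort (· ≤ ·)
  have hnodup : (l.take k).Nodup := (s.sort_nodup _).sublist (List.take_sublist _ _)
  have hsort : (l.take k).toFinset.sort (· ≤ ·) = l.take k :=
    (List.toFinset_sort _ hnodup).mpr ((s.pairwise_sort _).sublist (List.take_sublist _ _))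
  refine ⟨(l.take k).toFinset, fun x hx => ?_, ?_, fun j hj hjk => ?_⟩
  · simpa [l] using List.mem_of_mem_take (List.mem_toFinset.mp hx)
  · rw [List.toFinset_card_of_nodup hnodup, List.length_take, Finset.length_sort]; omega
  · simp only [nth, hsort, List.getD_eq_getElem?_getD, List.getElem?_take]
    simp [show j - 1 < k by omega, l]

lemma nth_sdiff_le_nth {n : ℕ} {A B : Finset ℕ} (hA : 0 ∉ A) (hB : B ⊆ Icc 1 n)
    (h : ∀ i j, 1 ≤ i → i ≤ #A → 1 ≤ j → j ≤ #B → i + j ≤ max (nth A i) (nth B j))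
    {j : ℕ} (hj : 1 ≤ j) (hjB : j ≤ #B) :
    nth (Icc 1 n \ A) j ≤ nth B j := by
  set m := nth B j
  have hB0 := zero_notMem_of_subset_Icc hB
  have hjm : j ≤ mu B m := (nth_le_iff_le_mu_s15 hB0 hj hjB).mp le_rfl
  have hmn : m ≤ n := (nth_le_iff_le_mu_s15 hB0 hj hjB).mpr (by rwa [mu_eq_card hB])
  have hsplit := mu_sdiff_add_mu A hmn
  have hC : j ≤ mu (Icc 1 n \ A) m := by
    rcases Nat.eq_zero_or_pos (mu A m) with h0 | ht
    · have := mu_le B m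
      omega
    · have hAt : nth A (mu A m) ≤ m := (nth_le_iff_le_mu_s15 hA ht (mu_le_card_s15 A m)).mpr le_rfl
      have := h _ j ht (mu_le_card_s15 A m) hj hjB
      omega
  exact (nth_le_iff_le_mu_s15 (zero_notMem_of_subset_Icc sdiff_subset) hj
    (hC.trans (mu_le_card_s15 _ m))).mpr hC

theorem stmt15_general (n k : ℕ) (hn : 2 * k ≤ n) (𝒜 : Set (Finset ℕ))
    (h𝒜 : ∀ A ∈ 𝒜, A ⊆ Finset.Icc 1 n ∧ A.card = k)
    (hlc : ∀ A ∈ 𝒜, ∀ B, B ⊆ Finset.Icc 1 n → B.card = k → eLE B A → B ∈ 𝒜)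
    (hint : IsIntersecting 𝒜) :
    ∀ A ∈ 𝒜, ∀ B ∈ 𝒜, ∃ i j, 1 ≤ i ∧ i ≤ k ∧ 1 ≤ j ∧ j ≤ k ∧
      max (nth A i) (nth B j) < i + j := by
  intro A hA B hB
  by_contra! hcon
  obtain ⟨hAn, rfl⟩ := h𝒜 A hA
  obtain ⟨hBn, hBA⟩ := h𝒜 B hB
  have hC : #A ≤ #(Icc 1 n \ A) := by
    rw [card_sdiff_of_subset hAn, Nat.card_Icc]
    omega
  obtain ⟨D, hDC, hDA, hDnth⟩ := exists_subset_card_eq_forall_nth_eq _ hC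
  have hDB : eLE D B := ⟨hDA.trans hBA.symm, fun j hj hjB => by
    rw [hDnth j hj (hBA ▸ hjB)]
    exact nth_sdiff_le_nth (zero_notMem_of_subset_Icc hAn) hBn
      (fun i j hi hiA hj hjB => hcon i j hi hiA hj (hBA ▸ hjB)) hj hjB⟩
  obtain ⟨x, hx⟩ := hint A hA D (hlc B hB D (hDC.trans sdiff_subset) hDA hDB)
  exact (mem_sdiff.mp (hDC (mem_inter.mp hx).2)).2 (mem_inter.mp hx).1

theorem stmt15 (n k : ℕ) (h4 : 4 ≤ 2 * k) (hn : 2 * k ≤ n) (𝒜 : Set (Finset ℕ))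
    (h𝒜 : ∀ A ∈ 𝒜, A ⊆ Finset.Icc 1 n ∧ A.card = k)
    (hlc : ∀ A ∈ 𝒜, ∀ B, B ⊆ Finset.Icc 1 n → B.card = k → eLE B A → B ∈ 𝒜)
    (hint : IsIntersecting 𝒜) :
    ∀ A ∈ 𝒜, ∀ B ∈ 𝒜, ∃ i j, 1 ≤ i ∧ i ≤ k ∧ 1 ≤ j ∧ j ≤ k ∧
      max (nth A i) (nth B j) < i + j :=
  stmt15_general n k hn 𝒜 h𝒜 hlc hint
end
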